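/- arXiv:1601.02763 — 2 statements merged into one kernel-verified Lean document; each statement's English description precedes it below -/
import Mathlib

section
/- Let r ≥ 2 and let C be a linear [n,k,d]_q code with k ≥ r + 2 in which every coordinate has locality r and whose minimum Hamming distance satisfies d = n − k + 2 − ⌈k/r⌉. Suppose some coordinate i has a repair set R of size exactly r with all coefficients nonzero, and some codeword of C is nonzero at coordinate i. Then there exists a linear [n−1, k−1, d]_q code whose coordinates admit a partition into a set of r coordinates each having locality r−1 and a set of n−1−r coordinates each having locality r; in particular its minimum distance d satisfies d = (n−1) − (k−1) + 2 − ⌈r/r⌉ − ⌈((k−1) − (r−1))/r⌉, i.e., the shortened code attains the two-locality Singleton bound with equality. -/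
/-!
Shortening at `i` keeps the distance at least `d` and lowers the dimension to `k - 1`; the repair
equation of `i` becomes a relation with full support on the `r` coordinates of `R`, so they form a
local group of locality `r - 1`. To find a word of weight `d`, run the greedy argument behind the
Singleton-like bound for locally repairable codes on the shortened code, starting from this
deficient group: repeatedly adjoin a coordinate together with its repair set until the subcode
vanishing there has dimension one. The head start of the deficient group yields a nonzero word of
weight at most `d`.
-/

open Finset

/-- `C` is a linear `[n,k,d]_q` code over `F`: it has `F`-dimension `k` and its minimum
Hamming distance (least Hamming weight of a nonzero codeword) equals `d`. -/
def IsLinearCode (F : Type*) [Field F] [DecidableEq F] {n : ℕ}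
    (C : Submodule F (Fin n → F)) (k d : ℕ) : Prop :=
  Module.finrank F C = k ∧
    (∀ c ∈ C, c ≠ 0 → d ≤ hammingNorm c) ∧
    ∃ c ∈ C, c ≠ 0 ∧ hammingNorm c = d

/-- Coordinate `i` of the code `C` has locality `r`. -/
def HasLocality (F : Type*) [Field F] {n : ℕ} (C : Submodule F (Fin n → F))
    (i : Fin n) (r : ℕ) : Prop :=
  ∃ R : Finset (Fin n), i ∉ R ∧ R.card ≤ r ∧
    ∃ lam : Fin n → F, ∀ c ∈ C, c i = ∑ j ∈ R, lam j * c j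

/-- Coordinate `i` of the code `C` has locality `r` with a repair set contained in `S`. -/
def HasLocalityIn (F : Type*) [Field F] {n : ℕ} (C : Submodule F (Fin n → F))
    (i : Fin n) (r : ℕ) (S : Finset (Fin n)) : Prop :=
  ∃ R : Finset (Fin n), R ⊆ S ∧ i ∉ R ∧ R.card ≤ r ∧
    ∃ lam : Fin n → F, ∀ c ∈ C, c i = ∑ j ∈ R, lam j * c j

/-- `H(I)`: the `F`-dimension of the image of `C` under the coordinate projection onto `I`. -/
noncomputable def projDim (F : Type*) [Field F] {n : ℕ}
    (C : Submodule F (Fin n → F)) (I : Finset (Fin n)) : ℕ :=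
  Module.finrank F (C.map (LinearMap.funLeft F F (fun i : {x // x ∈ I} => (i : Fin n))))

/-- `k_opt^{(q)}(n,d)`: the largest dimension of a linear code of length `n` over `F`
with minimum Hamming distance at least `d`. -/
noncomputable def kopt (F : Type*) [Field F] [DecidableEq F] (n d : ℕ) : ℕ :=
  sSup {k | ∃ C : Submodule F (Fin n → F), Module.finrank F C = k ∧
    ∀ c ∈ C, c ≠ 0 → d ≤ hammingNorm c}

open Finset Module

theorem Submodule.finrank_le_finrank_inf_ker_add_one {F V : Type*} [Field F] [AddCommGroup V]
    [Module F V] [FiniteDimensional F V] (W : Submodule F V) (φ : V →ₗ[F] F) :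
    finrank F W ≤ finrank F ↥(W ⊓ LinearMap.ker φ) + 1 := by
  have hsup := Submodule.finrank_sup_add_finrank_inf_eq W (LinearMap.ker φ)
  have hle := Submodule.finrank_le (W ⊔ LinearMap.ker φ)
  have hker := φ.finrank_range_add_finrank_ker
  have hrange : finrank F (LinearMap.range φ) ≤ 1 :=
    (Submodule.finrank_le _).trans (finrank_self F).le
  omega

section VanishingSubcode

variable {F : Type*} [Field F] {n : ℕ}

-- Its dimension is `finrank F D - projDim F D J`; we track it instead of the rank `H(J)`.
def vanishingSubcode (D : Submodule F (Fin n → F)) (J : Finset (Fin n)) :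
    Submodule F (Fin n → F) :=
  D ⊓ ⨅ j ∈ J, LinearMap.ker (LinearMap.proj j)

variable {D : Submodule F (Fin n → F)} {J : Finset (Fin n)}

theorem mem_vanishingSubcode {c : Fin n → F} :
    c ∈ vanishingSubcode D J ↔ c ∈ D ∧ ∀ j ∈ J, c j = 0 := by
  simp [vanishingSubcode, Submodule.mem_iInf]

theorem vanishingSubcode_empty : vanishingSubcode D ∅ = D := by
  ext c; simp [mem_vanishingSubcode]

theorem vanishingSubcode_univ : vanishingSubcode D univ = ⊥ :=
  eq_bot_iff.mpr fun _ hc =>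
    (Submodule.mem_bot F).mpr (funext fun j => (mem_vanishingSubcode.mp hc).2 j (mem_univ j))

theorem vanishingSubcode_insert (x : Fin n) :
    vanishingSubcode D (insert x J) =
      vanishingSubcode D J ⊓ LinearMap.ker (LinearMap.proj x) := by
  ext c
  simp only [mem_vanishingSubcode, Submodule.mem_inf, LinearMap.mem_ker, LinearMap.proj_apply,
    forall_mem_insert]
  tauto

theorem finrank_vanishingSubcode_le_insert (x : Fin n) :
    finrank F (vanishingSubcode D J) ≤ finrank F (vanishingSubcode D (insert x J)) + 1 := by
  rw [vanishingSubcode_insert]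
  exact Submodule.finrank_le_finrank_inf_ker_add_one _ _

theorem finrank_vanishingSubcode_le_union (T : Finset (Fin n)) :
    finrank F (vanishingSubcode D J) ≤ finrank F (vanishingSubcode D (J ∪ T)) + #T := by
  induction T using Finset.induction_on with
  | empty => rw [union_empty, card_empty, add_zero]
  | insert a T ha ih =>
    have := finrank_vanishingSubcode_le_insert (D := D) (J := J ∪ T) a
    rw [union_insert, card_insert_of_notMem ha]
    omega

theorem vanishingSubcode_insert_of_repair {x : Fin n} {S : Finset (Fin n)} {μ : Fin n → F}
    (hSJ : S ⊆ J) (hx : ∀ c ∈ D, c x = ∑ j ∈ S, μ j * c j) :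
    vanishingSubcode D (insert x J) = vanishingSubcode D J := by
  rw [vanishingSubcode_insert]
  refine le_antisymm inf_le_left fun c hc => Submodule.mem_inf.mpr ⟨hc, ?_⟩
  rw [mem_vanishingSubcode] at hc
  rw [LinearMap.mem_ker, LinearMap.proj_apply, hx c hc.1]
  exact sum_eq_zero fun j hj => by rw [hc.2 j (hSJ hj), mul_zero]

theorem exists_subset_finrank_vanishingSubcode_eq (T : Finset (Fin n)) {v : ℕ}
    (hT : finrank F (vanishingSubcode D (J ∪ T)) ≤ v)
    (hJ : v ≤ finrank F (vanishingSubcode D J)) :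
    ∃ P ⊆ T, finrank F (vanishingSubcode D (J ∪ P)) = v := by
  induction T using Finset.induction_on with
  | empty =>
    rw [union_empty] at hT
    exact ⟨∅, subset_rfl, by rw [union_empty]; omega⟩
  | insert a T _ ih =>
    by_cases hv : finrank F (vanishingSubcode D (J ∪ T)) ≤ v
    · obtain ⟨P, hPT, hP⟩ := ih hv
      exact ⟨P, hPT.trans (subset_insert a T), hP⟩
    · have := finrank_vanishingSubcode_le_insert (D := D) (J := J ∪ T) a
      rw [union_insert] at hT
      exact ⟨insert a T, subset_rfl, by rw [union_insert]; omega⟩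

theorem hammingNorm_add_card_le [DecidableEq F] {c : Fin n → F} (hc : ∀ j ∈ J, c j = 0) :
    hammingNorm c + #J ≤ n := by
  have hsupp : ({j | c j ≠ 0} : Finset (Fin n)) ⊆ Jᶜ := fun j hj =>
    mem_compl.mpr fun hjJ => (mem_filter.mp hj).2 (hc j hjJ)
  have hJ := card_le_univ J
  rw [hammingNorm]
  grw [card_le_card hsupp, card_compl]
  simp only [Fintype.card_fin] at hJ ⊢
  omega

end VanishingSubcode

section Greedy

variable {F : Type*} [Field F] {n r : ℕ} {D : Submodule F (Fin n → F)}

theorem exists_finrank_vanishingSubcode_eq_one (hr : 0 < r) (hloc : ∀ x, HasLocality F D x r)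
    (t : ℕ) (J : Finset (Fin n)) (hJ : 1 ≤ finrank F (vanishingSubcode D J))
    (ht : t ≤ r * #J + (r + 1) * finrank F (vanishingSubcode D J)) :
    ∃ J', finrank F (vanishingSubcode D J') = 1 ∧
      t < r * #J' + (r + 1) * finrank F (vanishingSubcode D J') + r := by
  -- Adjoining a new coordinate `x` with its repair set `S` costs at most `#(S \ J) ≤ r`
  -- dimensions and gains `#(S \ J) + 1` coordinates, so the potential
  -- `r * #J + (r + 1) * dim` does not drop. If the dimension would fall to `0`, stop inside
  -- `S \ J` where it equals `1`.
  obtain hJ1 | hJ2 := hJ.eq_or_lt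
  · exact ⟨J, hJ1.symm, by omega⟩
  obtain ⟨x, hxJ⟩ : ∃ x, x ∉ J := by
    by_contra! hJ
    rw [eq_univ_of_forall hJ, vanishingSubcode_univ, finrank_bot] at hJ2
    omega
  obtain ⟨S, hxS, hSr, μ, hμ⟩ := hloc x
  have hJS : J ∪ S = J ∪ (S \ J) := union_sdiff_self_eq_union.symm
  have hdrop := finrank_vanishingSubcode_le_union (D := D) (J := J) (S \ J)
  have hSJr : #(S \ J) ≤ r := (card_le_card sdiff_subset).trans hSr
  rw [← hJS] at hdrop
  by_cases hS : 1 ≤ finrank F (vanishingSubcode D (J ∪ S))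
  · have hx : x ∉ J ∪ S := by simp [hxJ, hxS]
    have hfree := vanishingSubcode_insert_of_repair (subset_union_right (s₁ := J)) hμ
    have hcard : #(insert x (J ∪ S)) = #J + #(S \ J) + 1 := by
      rw [card_insert_of_notMem hx, hJS, card_union_of_disjoint disjoint_sdiff]
    refine exists_finrank_vanishingSubcode_eq_one hr hloc t (insert x (J ∪ S))
      (by rwa [hfree]) ?_
    rw [hfree, hcard]
    nlinarith
  · obtain ⟨P, hPS, hP⟩ := exists_subset_finrank_vanishingSubcode_eq (D := D) (J := J) (S \ J)
      (v := 1) (by rw [← hJS]; omega) (by omega)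
    have hPlt : #P < #(S \ J) := card_lt_card (ssubset_of_subset_of_ne hPS (by
      rintro rfl; rw [← hJS] at hP; omega))
    have hPdrop := finrank_vanishingSubcode_le_union (D := D) (J := J) P
    have hcard : #(J ∪ P) = #J + #P :=
      card_union_of_disjoint (disjoint_of_subset_right hPS disjoint_sdiff)
    refine ⟨J ∪ P, hP, ?_⟩
    rw [hP, hcard]
    rw [hP] at hPdrop
    nlinarith
termination_by #Jᶜ
decreasing_by
  exact card_lt_card (compl_ssubset_compl.mpr (ssubset_insert hx |>.trans_le' subset_union_left))

end Greedy

section Locality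

variable {F : Type*} [Field F] {n r : ℕ} {D : Submodule F (Fin n → F)}

theorem HasLocalityIn.hasLocality {x : Fin n} {S : Finset (Fin n)}
    (h : HasLocalityIn F D x r S) : HasLocality F D x r :=
  let ⟨R, _, hxR, hR, μ, hμ⟩ := h
  ⟨R, hxR, hR, μ, hμ⟩

theorem hasLocalityIn_erase_of_sum_eq_zero {A : Finset (Fin n)} {μ : Fin n → F}
    (h : ∀ c ∈ D, ∑ j ∈ A, μ j * c j = 0) {x : Fin n} (hx : x ∈ A) (hμx : μ x ≠ 0) :
    HasLocalityIn F D x (#A - 1) (A.erase x) := by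
  refine ⟨A.erase x, subset_rfl, notMem_erase x A, (card_erase_of_mem hx).le,
    fun j => -(μ j / μ x), fun c hc => ?_⟩
  have hsplit := h c hc
  rw [← add_sum_erase A _ hx] at hsplit
  simp only [neg_mul, div_mul_eq_mul_div, sum_neg_distrib, ← sum_div]
  field_simp
  linear_combination hsplit

theorem finrank_add_one_le_of_hasLocalityIn_erase {A : Finset (Fin n)} {x : Fin n} (hx : x ∈ A)
    (h : HasLocalityIn F D x r (A.erase x)) :
    finrank F D + 1 ≤ finrank F (vanishingSubcode D A) + #A := by
  obtain ⟨R, hRA, -, -, μ, hμ⟩ := h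
  have hfree := vanishingSubcode_insert_of_repair hRA hμ
  rw [insert_erase hx] at hfree
  have hdrop := finrank_vanishingSubcode_le_union (D := D) (J := ∅) (A.erase x)
  rw [empty_union, vanishingSubcode_empty, ← hfree, card_erase_of_mem hx] at hdrop
  have := card_pos.mpr ⟨x, hx⟩
  omega

end Locality

section SingletonBound

variable {F : Type*} [Field F] [DecidableEq F] {n r : ℕ} {D : Submodule F (Fin n → F)}

theorem ceil_div_le_of_mul_lt {k j : ℕ} (hr : 0 < r) (h : (r + 1) * k < r * j + 2 * r) :
    ⌈((k : ℚ) + 1) / r⌉ ≤ (j : ℤ) + 2 - k := by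
  rw [Int.ceil_le, div_le_iff₀ (by exact_mod_cast hr)]
  have h' : ((r + 1) * k + 1 : ℚ) ≤ r * j + 2 * r := by exact_mod_cast h
  push_cast
  linarith

theorem exists_hammingNorm_le_of_dependent_set (hr : 0 < r)
    (hloc : ∀ x, HasLocality F D x r) (hrD : r ≤ finrank F D) (A : Finset (Fin n))
    (hA : #A ≤ r)
    (hdef : finrank F D + 1 ≤ finrank F (vanishingSubcode D A) + #A) :
    ∃ c ∈ D, c ≠ 0 ∧
      (hammingNorm c : ℤ) ≤ n - finrank F D + 2 - ⌈((finrank F D : ℚ) + 1) / r⌉ := by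
  have hA1 :
      (r + 1) * finrank F D + 1 ≤ r * #A + (r + 1) * finrank F (vanishingSubcode D A) := by
    nlinarith [Nat.mul_le_mul_left (r + 1) hdef]
  obtain ⟨J, hJ, hJA⟩ := exists_finrank_vanishingSubcode_eq_one hr hloc _ A (by omega) le_rfl
  obtain ⟨c, hc, hc0⟩ :=
    Submodule.exists_mem_ne_zero_of_ne_bot (Submodule.one_le_finrank_iff.mp hJ.ge)
  rw [mem_vanishingSubcode] at hc
  rw [hJ] at hJA
  have hceil := ceil_div_le_of_mul_lt (k := finrank F D) (j := #J) hr (by omega)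
  have hwt := hammingNorm_add_card_le hc.2
  exact ⟨c, hc.1, hc0, by omega⟩

end SingletonBound

section Shortening

variable {F : Type*} [Field F] {n r : ℕ}

def shorten (C : Submodule F (Fin (n + 1) → F)) (i : Fin (n + 1)) : Submodule F (Fin n → F) :=
  (vanishingSubcode C {i}).map (LinearMap.funLeft F F i.succAbove)

variable {C : Submodule F (Fin (n + 1) → F)} {i : Fin (n + 1)}

theorem mem_shorten {c' : Fin n → F} :
    c' ∈ shorten C i ↔ ∃ c ∈ C, c i = 0 ∧ c ∘ i.succAbove = c' := by
  simp only [shorten, Submodule.mem_map, mem_vanishingSubcode, mem_singleton, forall_eq,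
    and_assoc]
  rfl

theorem hammingNorm_comp_succAbove [DecidableEq F] {c : Fin (n + 1) → F} (hc : c i = 0) :
    hammingNorm (c ∘ i.succAbove) = hammingNorm c := by
  simp only [hammingNorm, card_filter, Fin.sum_univ_succAbove _ i, hc, ne_eq, not_true_eq_false,
    if_false, zero_add, Function.comp_apply]

theorem sum_preimage_succAbove {c : Fin (n + 1) → F} (hc : c i = 0) (S : Finset (Fin (n + 1)))
    (μ : Fin (n + 1) → F) :
    ∑ j ∈ S.preimage i.succAbove Fin.succAbove_right_injective.injOn,
      μ (i.succAbove j) * c (i.succAbove j) = ∑ j ∈ S, μ j * c j := by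
  refine sum_preimage _ _ _ (fun j => μ j * c j) fun j _ hj => ?_
  rw [Fin.range_succAbove, Set.mem_compl_singleton_iff, not_not] at hj
  rw [hj, hc, mul_zero]

theorem finrank_shorten (hi : ∃ c ∈ C, c i ≠ 0) :
    finrank F (shorten C i) + 1 = finrank F C := by
  have hinj : LinearMap.ker ((LinearMap.funLeft F F i.succAbove).domRestrict
      (vanishingSubcode C {i})) = ⊥ := by
    refine LinearMap.ker_eq_bot'.mpr fun c hc => Subtype.ext (funext fun j => ?_)
    obtain rfl | ⟨y, rfl⟩ := Fin.eq_self_or_eq_succAbove i j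
    · exact (mem_vanishingSubcode.mp c.2).2 j (mem_singleton_self j)
    · exact congrFun hc y
  have hlt : vanishingSubcode C {i} < C := by
    obtain ⟨c, hc, hci⟩ := hi
    refine SetLike.lt_iff_le_and_exists.mpr ⟨inf_le_left, c, hc, fun hc' => hci ?_⟩
    exact (mem_vanishingSubcode.mp hc').2 i (mem_singleton_self i)
  have hdrop := finrank_vanishingSubcode_le_insert (D := C) (J := ∅) i
  rw [vanishingSubcode_empty, insert_empty] at hdrop
  rw [shorten, ← LinearMap.range_domRestrict,
    LinearMap.finrank_range_of_inj (LinearMap.ker_eq_bot.mp hinj)]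
  have := Submodule.finrank_lt_finrank_of_lt hlt
  omega

theorem le_hammingNorm_of_mem_shorten [DecidableEq F] {d : ℕ}
    (hd : ∀ c ∈ C, c ≠ 0 → d ≤ hammingNorm c) :
    ∀ c ∈ shorten C i, c ≠ 0 → d ≤ hammingNorm c := by
  intro c' hc' hc'0
  obtain ⟨c, hc, hci, rfl⟩ := mem_shorten.mp hc'
  rw [hammingNorm_comp_succAbove hci]
  exact hd c hc (by rintro rfl; exact hc'0 rfl)

theorem HasLocality.shorten {x : Fin n} (h : HasLocality F C (i.succAbove x) r) :
    HasLocality F (shorten C i) x r := by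
  obtain ⟨S, hxS, hSr, μ, hμ⟩ := h
  refine ⟨S.preimage i.succAbove Fin.succAbove_right_injective.injOn,
    fun hx => hxS (mem_preimage.mp hx), ?_, fun j => μ (i.succAbove j), ?_⟩
  · rw [card_preimage]
    exact card_filter_le _ _ |>.trans hSr
  · intro c' hc'
    obtain ⟨c, hc, hci, rfl⟩ := mem_shorten.mp hc'
    exact (hμ c hc).trans (sum_preimage_succAbove hci S μ).symm

theorem sum_preimage_succAbove_eq_zero_of_mem_shorten {R : Finset (Fin (n + 1))}
    {lam : Fin (n + 1) → F} (hrepair : ∀ c ∈ C, c i = ∑ j ∈ R, lam j * c j) :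
    ∀ c ∈ shorten C i,
      ∑ j ∈ R.preimage i.succAbove Fin.succAbove_right_injective.injOn,
        lam (i.succAbove j) * c j = 0 := by
  intro c' hc'
  obtain ⟨c, hc, hci, rfl⟩ := mem_shorten.mp hc'
  exact (sum_preimage_succAbove hci R lam).trans ((hrepair c hc).symm.trans hci)

theorem card_preimage_succAbove {R : Finset (Fin (n + 1))} (hiR : i ∉ R) :
    #(R.preimage i.succAbove Fin.succAbove_right_injective.injOn) = #R := by
  rw [card_preimage, filter_true_of_mem]
  intro j hj
  rw [Fin.range_succAbove, Set.mem_compl_singleton_iff]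
  exact ne_of_mem_of_not_mem hj hiR

end Shortening

theorem stmt3_general {F : Type*} [Field F] [DecidableEq F] {n k d r : ℕ}
    (hk : r + 2 ≤ k)
    (C : Submodule F (Fin n → F)) (hC : IsLinearCode F C k d)
    (hloc : ∀ i : Fin n, HasLocality F C i r)
    (hd : (d : ℤ) = (n : ℤ) - k + 2 - ⌈(k : ℚ) / (r : ℚ)⌉)
    (i : Fin n) (R : Finset (Fin n)) (lam : Fin n → F)
    (hiR : i ∉ R) (hRcard : R.card = r) (hlam : ∀ j ∈ R, lam j ≠ 0)
    (hrepair : ∀ c ∈ C, c i = ∑ j ∈ R, lam j * c j)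
    (hnz : ∃ c ∈ C, c i ≠ 0) :
    (∃ C' : Submodule F (Fin (n - 1) → F), IsLinearCode F C' (k - 1) d ∧
      ∃ A B : Finset (Fin (n - 1)), Disjoint A B ∧ A ∪ B = Finset.univ ∧
        A.card = r ∧ B.card = n - 1 - r ∧
        (∀ x ∈ A, HasLocality F C' x (r - 1)) ∧
        (∀ x ∈ B, HasLocality F C' x r)) ∧
    (d : ℤ) = ((n : ℤ) - 1) - ((k : ℤ) - 1) + 2 - ⌈(r : ℚ) / (r : ℚ)⌉ -
      ⌈(((k : ℚ) - 1) - ((r : ℚ) - 1)) / (r : ℚ)⌉ := by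
  obtain ⟨N, rfl⟩ := Nat.exists_eq_add_one_of_ne_zero i.pos.ne'
  rw [Nat.add_sub_cancel]
  obtain ⟨c, hcC, hci⟩ := hnz
  have hr : 0 < r := hRcard ▸ card_pos.mpr (nonempty_of_sum_ne_zero (hrepair c hcC ▸ hci))
  have hdim : finrank F (shorten C i) + 1 = k := hC.1 ▸ finrank_shorten ⟨c, hcC, hci⟩
  set A := R.preimage i.succAbove Fin.succAbove_right_injective.injOn
  have hA : #A = r := hRcard ▸ card_preimage_succAbove hiR
  have hlocA : ∀ x ∈ A, HasLocalityIn F (shorten C i) x (r - 1) (A.erase x) := fun x hx =>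
    hA ▸ hasLocalityIn_erase_of_sum_eq_zero
      (sum_preimage_succAbove_eq_zero_of_mem_shorten hrepair) hx (hlam _ (mem_preimage.mp hx))
  have hlocB : ∀ x, HasLocality F (shorten C i) x r := fun x => (hloc _).shorten
  obtain ⟨x, hx⟩ : A.Nonempty := card_pos.mp (hA ▸ hr)
  obtain ⟨c', hc', hc'0, hc'd⟩ := exists_hammingNorm_le_of_dependent_set hr hlocB
    (by omega) A hA.le (finrank_add_one_le_of_hasLocalityIn_erase hx (hlocA x hx))
  have hdist := le_hammingNorm_of_mem_shorten (i := i) hC.2.1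
  have hkQ : (k : ℚ) = (finrank F (shorten C i) : ℚ) + 1 := by exact_mod_cast hdim.symm
  rw [← hkQ] at hc'd
  refine ⟨⟨shorten C i, ⟨by omega, hdist, c', hc', hc'0, ?_⟩, A, Aᶜ, disjoint_compl_right,
    union_compl A, hA, by rw [card_compl, hA, Fintype.card_fin],
    fun x hx => (hlocA x hx).hasLocality, fun x _ => hlocB x⟩, ?_⟩
  · have := hdist c' hc' hc'0
    push_cast at hd
    omega
  · rw [sub_sub_sub_cancel_right (k : ℚ), sub_div (k : ℚ),
      div_self (by positivity : (r : ℚ) ≠ 0), Int.ceil_sub_one, Int.ceil_one]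
    push_cast at hd ⊢
    linarith

theorem stmt3 {F : Type*} [Field F] [Fintype F] [DecidableEq F] {n k d r : ℕ}
    (hr : 2 ≤ r) (hk : r + 2 ≤ k)
    (C : Submodule F (Fin n → F)) (hC : IsLinearCode F C k d)
    (hloc : ∀ i : Fin n, HasLocality F C i r)
    (hd : (d : ℤ) = (n : ℤ) - k + 2 - ⌈(k : ℚ) / (r : ℚ)⌉)
    (i : Fin n) (R : Finset (Fin n)) (lam : Fin n → F)
    (hiR : i ∉ R) (hRcard : R.card = r) (hlam : ∀ j ∈ R, lam j ≠ 0)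
    (hrepair : ∀ c ∈ C, c i = ∑ j ∈ R, lam j * c j)
    (hnz : ∃ c ∈ C, c i ≠ 0) :
    (∃ C' : Submodule F (Fin (n - 1) → F), IsLinearCode F C' (k - 1) d ∧
      ∃ A B : Finset (Fin (n - 1)), Disjoint A B ∧ A ∪ B = Finset.univ ∧
        A.card = r ∧ B.card = n - 1 - r ∧
        (∀ x ∈ A, HasLocality F C' x (r - 1)) ∧
        (∀ x ∈ B, HasLocality F C' x r)) ∧
    (d : ℤ) = ((n : ℤ) - 1) - ((k : ℤ) - 1) + 2 - ⌈(r : ℚ) / (r : ℚ)⌉ -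
      ⌈(((k : ℚ) - 1) - ((r : ℚ) - 1)) / (r : ℚ)⌉ :=
  stmt3_general hk C hC hloc hd i R lam hiR hRcard hlam hrepair hnz
end

section
/- Let r_1 < r_2 be positive integers and let C be a linear [n,k,d]_q code with a partition of {1,…,n} into disjoint sets S_1, S_2 with |S_i| = n_i ≥ 1, such that every coordinate in S_i has locality r_i with a repair set contained in S_i (i = 1,2). Then for all integers t_1, t_2 with 1 ≤ t_1 ≤ ⌈n_1/(r_1+1)⌉ and 1 ≤ t_2 ≤ ⌈n_2/(r_2+1)⌉, one has k ≤ t_1 r_1 + t_2 r_2 + k_opt^{(q)}(n − min(n_1, t_1(r_1+1)) − min(n_2, t_2(r_2+1)), d). -/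
open Finset

set_option synthInstance.maxHeartbeats 1000000
set_option maxHeartbeats 2000000

section Aux

variable {F : Type*} [Field F] {n : ℕ}

noncomputable def prj (F : Type*) [Field F] {n : ℕ} (I : Finset (Fin n)) :
    (Fin n → F) →ₗ[F] ({x // x ∈ I} → F) :=
  LinearMap.funLeft F F (fun i : {x // x ∈ I} => (i : Fin n))

lemma projDim_def (C : Submodule F (Fin n → F)) (I : Finset (Fin n)) :
    projDim F C I = Module.finrank F (C.map (prj F I)) := rfl

lemma prj_factor {I J : Finset (Fin n)} (h : I ⊆ J) :
    prj F I = (LinearMap.funLeft F F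
      (fun x : {x // x ∈ I} => (⟨x.1, h x.2⟩ : {x // x ∈ J}))).comp (prj F J) := rfl

lemma map_prj_factor (C : Submodule F (Fin n → F)) {I J : Finset (Fin n)} (h : I ⊆ J) :
    C.map (prj F I) = (C.map (prj F J)).map (LinearMap.funLeft F F
      (fun x : {x // x ∈ I} => (⟨x.1, h x.2⟩ : {x // x ∈ J}))) := by
  rw [prj_factor (F := F) h, Submodule.map_comp]

lemma projDim_le_card (C : Submodule F (Fin n → F)) (I : Finset (Fin n)) :
    projDim F C I ≤ I.card := by
  have h := Submodule.finrank_le (C.map (prj F I))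
  rwa [Module.finrank_pi, Fintype.card_coe] at h

lemma projDim_le_of_subset (C : Submodule F (Fin n → F)) {I J : Finset (Fin n)} (h : I ⊆ J) :
    projDim F C J ≤ projDim F C I + (J.card - I.card) := by
  classical
  set ι : {x // x ∈ I} → {x // x ∈ J} := fun x => ⟨x.1, h x.2⟩ with hι
  have hιinj : Function.Injective ι := by
    intro a b hab
    exact Subtype.ext (congrArg Subtype.val hab : _)
  set ρ : ({x // x ∈ J} → F) →ₗ[F] ({x // x ∈ I} → F) := LinearMap.funLeft F F ι with hρ
  -- rank-nullity for ρ restricted to the projected code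
  have rn := LinearMap.finrank_range_add_finrank_ker
    (ρ.comp (C.map (prj F J)).subtype)
  have hrange : LinearMap.range (ρ.comp (C.map (prj F J)).subtype) = C.map (prj F I) := by
    rw [LinearMap.range_comp, Submodule.range_subtype, ← map_prj_factor C h]
  have hkerle : Module.finrank F
      (LinearMap.ker (ρ.comp (C.map (prj F J)).subtype)) ≤ J.card - I.card := by
    have hker : LinearMap.ker (ρ.comp (C.map (prj F J)).subtype)
        = (LinearMap.ker ρ).comap (C.map (prj F J)).subtype := by
      rw [LinearMap.ker_comp]
    rw [hker]
    have h1 : Module.finrank F ((LinearMap.ker ρ).comap (C.map (prj F J)).subtype)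
        = Module.finrank F (((LinearMap.ker ρ).comap (C.map (prj F J)).subtype).map
          (C.map (prj F J)).subtype) := by
      rw [Submodule.finrank_map_subtype_eq]
    rw [h1, Submodule.map_comap_subtype]
    have h2 : Module.finrank F (LinearMap.ker ρ) = J.card - I.card := by
      have rn2 := LinearMap.finrank_range_add_finrank_ker ρ
      have hsurj : LinearMap.range ρ = ⊤ := LinearMap.range_eq_top.mpr
        (LinearMap.funLeft_surjective_of_injective F F ι hιinj)
      rw [hsurj, finrank_top, Module.finrank_pi, Module.finrank_pi,
        Fintype.card_coe, Fintype.card_coe] at rn2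
      omega
    calc Module.finrank F ↥(C.map (prj F J) ⊓ LinearMap.ker ρ)
        ≤ Module.finrank F (LinearMap.ker ρ) := Submodule.finrank_mono inf_le_right
      _ = J.card - I.card := h2
  rw [hrange] at rn
  rw [projDim_def C J, projDim_def C I]
  omega

end Aux

section Aux2
variable {F : Type*} [Field F] {n : ℕ}

lemma projDim_insert_of_dep (C : Submodule F (Fin n → F)) {I : Finset (Fin n)} {j : Fin n}
    {R : Finset (Fin n)} (hR : R ⊆ I) (lam : Fin n → F)
    (hdep : ∀ c ∈ C, c j = ∑ x ∈ R, lam x * c x) :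
    projDim F C (insert j I) ≤ projDim F C I := by
  classical
  set J : Finset (Fin n) := insert j I with hJ
  have h : I ⊆ J := Finset.subset_insert j I
  set ι : {x // x ∈ I} → {x // x ∈ J} := fun x => ⟨x.1, h x.2⟩ with hι
  set ρ : ({x // x ∈ J} → F) →ₗ[F] ({x // x ∈ I} → F) := LinearMap.funLeft F F ι with hρ
  set ψ := ρ.comp (C.map (prj F J)).subtype with hψ
  have hinj : Function.Injective ψ := by
    rw [← LinearMap.ker_eq_bot]
    rw [Submodule.eq_bot_iff]
    rintro ⟨g, hg⟩ hgker
    obtain ⟨c, hcC, hcg⟩ := hg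
    rw [LinearMap.mem_ker] at hgker
    have hgker' : ρ g = 0 := hgker
    have hzero : ∀ x : {x // x ∈ I}, g ⟨x.1, h x.2⟩ = 0 := fun x => congrFun hgker' x
    have hcI : ∀ x ∈ I, c x = 0 := by
      intro x hx
      have := hzero ⟨x, hx⟩
      rw [← hcg] at this
      exact this
    have hcJ : ∀ y : {x // x ∈ J}, c y.1 = 0 := by
      rintro ⟨y, hy⟩
      rcases Finset.mem_insert.mp hy with hyj | hyI
      · subst hyj
        rw [hdep c hcC]
        refine Finset.sum_eq_zero fun x hx => ?_
        rw [hcI x (hR hx), mul_zero]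
      · exact hcI y hyI
    refine Subtype.ext ?_
    show g = 0
    rw [← hcg]
    funext y
    exact hcJ y
  have hrange : LinearMap.range ψ = C.map (prj F I) := by
    rw [hψ, LinearMap.range_comp, Submodule.range_subtype, ← map_prj_factor C h]
  have := LinearMap.finrank_range_of_inj hinj
  rw [hrange] at this
  rw [projDim_def C J, projDim_def C I]
  omega

lemma projDim_union_le (C : Submodule F (Fin n → F)) (I J : Finset (Fin n)) :
    projDim F C (I ∪ J) ≤ projDim F C I + projDim F C J := by
  classical
  have hI : I ⊆ I ∪ J := Finset.subset_union_left
  have hJ : J ⊆ I ∪ J := Finset.subset_union_right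
  set ρI : ({x // x ∈ I ∪ J} → F) →ₗ[F] ({x // x ∈ I} → F) :=
    LinearMap.funLeft F F (fun x : {x // x ∈ I} => (⟨x.1, hI x.2⟩ : {x // x ∈ I ∪ J})) with hρI
  set ρJ : ({x // x ∈ I ∪ J} → F) →ₗ[F] ({x // x ∈ J} → F) :=
    LinearMap.funLeft F F (fun x : {x // x ∈ J} => (⟨x.1, hJ x.2⟩ : {x // x ∈ I ∪ J})) with hρJ
  set P := C.map (prj F (I ∪ J)) with hP
  set φI := ρI.comp P.subtype with hφI
  have rn := LinearMap.finrank_range_add_finrank_ker φI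
  have hrange : LinearMap.range φI = C.map (prj F I) := by
    rw [hφI, LinearMap.range_comp, Submodule.range_subtype, hP, ← map_prj_factor C hI]
  set K := LinearMap.ker φI with hK
  set χ := ρJ.comp (P.subtype.comp K.subtype) with hχ
  have hinj : Function.Injective χ := by
    intro a b hab
    have haI : ρI a.1.1 = 0 := a.2
    have hbI : ρI b.1.1 = 0 := b.2
    have hJeq : ρJ a.1.1 = ρJ b.1.1 := hab
    refine Subtype.ext (Subtype.ext ?_)
    funext y
    show a.1.1 y = b.1.1 y
    rcases Finset.mem_union.mp y.2 with hy | hy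
    · have h1 := congrFun haI ⟨y.1, hy⟩
      have h2 := congrFun hbI ⟨y.1, hy⟩
      calc a.1.1 y = 0 := h1
        _ = b.1.1 y := h2.symm
    · exact congrFun hJeq ⟨y.1, hy⟩
  have hrangele : LinearMap.range χ ≤ C.map (prj F J) := by
    rintro - ⟨⟨⟨g, hg⟩, hk⟩, rfl⟩
    obtain ⟨c, hcC, hcg⟩ := hg
    refine ⟨c, hcC, ?_⟩
    show prj F J c = ρJ g
    rw [← hcg]
    rfl
  have h1 := LinearMap.finrank_range_of_inj hinj
  have h2 : Module.finrank F (LinearMap.range χ) ≤ Module.finrank F (C.map (prj F J)) :=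
    Submodule.finrank_mono hrangele
  rw [hrange] at rn
  rw [projDim_def C (I ∪ J), projDim_def C I, projDim_def C J]
  have hdom : Module.finrank F P = Module.finrank F (C.map (prj F (I ∪ J))) := rfl
  omega

end Aux2


lemma greedy {F : Type*} [Field F] {n : ℕ} (C : Submodule F (Fin n → F))
    (S : Finset (Fin n)) (r : ℕ)
    (hloc : ∀ i ∈ S, HasLocalityIn F C i r S) :
    ∀ t : ℕ, (t - 1) * (r + 1) < S.card →
    ∃ I, I ⊆ S ∧ I.card = min S.card (t * (r + 1)) ∧ projDim F C I + t ≤ I.card := by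
  intro t
  induction t with
  | zero =>
    intro _
    exact ⟨∅, Finset.empty_subset S, by simp, by simpa using projDim_le_card C ∅⟩
  | succ t ih =>
    intro ht
    have htmul : t * (r + 1) < S.card := by simpa using ht
    have ht' : (t - 1) * (r + 1) < S.card :=
      lt_of_le_of_lt (Nat.mul_le_mul_right _ (Nat.sub_le t 1)) htmul
    obtain ⟨I, hIS, hIcard, hIdim⟩ := ih ht'
    rw [min_eq_right (le_of_lt htmul)] at hIcard
    have hlt : I.card < S.card := by omega
    have hex : ∃ i ∈ S, i ∉ I := by
      by_contra hco
      push_neg at hco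
      have hsub : S ⊆ I := fun x hx => hco x hx
      have := Finset.card_le_card hsub
      omega
    obtain ⟨i, hiS, hiI⟩ := hex
    obtain ⟨R, hRS, hiR, hRcard, lam, hlam⟩ := hloc i hiS
    set I' := insert i (I ∪ R) with hI'
    have hI'S : I' ⊆ S := by
      rw [hI', Finset.insert_subset_iff]
      exact ⟨hiS, Finset.union_subset hIS hRS⟩
    have hiIR : i ∉ I ∪ R := by
      rw [Finset.mem_union]
      tauto
    have hcardI' : I'.card = (I ∪ R).card + 1 := Finset.card_insert_of_notMem hiIR
    have hcardIR : (I ∪ R).card ≤ I.card + R.card := Finset.card_union_le I R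
    have hIIR : I.card ≤ (I ∪ R).card := Finset.card_le_card Finset.subset_union_left
    have h1 : projDim F C I' ≤ projDim F C (I ∪ R) :=
      projDim_insert_of_dep C Finset.subset_union_right lam hlam
    have h2 : projDim F C (I ∪ R) ≤ projDim F C I + ((I ∪ R).card - I.card) :=
      projDim_le_of_subset C Finset.subset_union_left
    have hI'dim : projDim F C I' + (t + 1) ≤ I'.card := by omega
    -- pad to the target size
    have hmulsucc : (t + 1) * (r + 1) = t * (r + 1) + r + 1 := by ring
    have hI'le1 : I'.card ≤ (t + 1) * (r + 1) := by omega
    have hI'le2 : I'.card ≤ S.card := Finset.card_le_card hI'S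
    have hmle : min S.card ((t + 1) * (r + 1)) ≤ S.card := min_le_left _ _
    have hI'm : I'.card ≤ min S.card ((t + 1) * (r + 1)) := le_min hI'le2 hI'le1
    obtain ⟨J, hI'J, hJS, hJcard⟩ := Finset.exists_subsuperset_card_eq hI'S hI'm hmle
    have h3 : projDim F C J ≤ projDim F C I' + (J.card - I'.card) :=
      projDim_le_of_subset C hI'J
    have hle : I'.card ≤ J.card := Finset.card_le_card hI'J
    exact ⟨J, hJS, hJcard, by omega⟩


lemma shorten_s10 {F : Type*} [Field F] [DecidableEq F] {n : ℕ} (C : Submodule F (Fin n → F))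
    {d : ℕ} (hd : ∀ c ∈ C, c ≠ 0 → d ≤ hammingNorm c) (I : Finset (Fin n)) :
    Module.finrank F C ≤ projDim F C I + kopt F (n - I.card) d := by
  classical
  set m := n - I.card with hm
  have hcardc : Fintype.card {x // x ∈ Iᶜ} = m := by
    rw [Fintype.card_coe, Finset.card_compl, Fintype.card_fin]
  set e : {x // x ∈ Iᶜ} ≃ Fin m := Fintype.equivFinOfCardEq hcardc with he
  set L : (Fin n → F) →ₗ[F] (Fin m → F) :=
    LinearMap.funLeft F F (fun j : Fin m => ((e.symm j : {x // x ∈ Iᶜ}) : Fin n)) with hL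
  -- rank-nullity for the projection onto I restricted to C
  set φ := (prj F I).comp C.subtype with hφ
  have rn := LinearMap.finrank_range_add_finrank_ker φ
  have hrange : LinearMap.range φ = C.map (prj F I) := by
    rw [hφ, LinearMap.range_comp, Submodule.range_subtype]
  set K := LinearMap.ker φ with hK
  -- the shortened code
  set ψ := L.comp (C.subtype.comp K.subtype) with hψ
  have hker0 : ∀ a : K, ∀ x ∈ I, (a.1 : Fin n → F) x = 0 := by
    rintro a x hx
    have h0 : prj F I a.1.1 = 0 := a.2
    exact congrFun h0 ⟨x, hx⟩
  have hinj : Function.Injective ψ := by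
    intro a b hab
    have hab' : L a.1.1 = L b.1.1 := hab
    refine Subtype.ext (Subtype.ext ?_)
    funext x
    show a.1.1 x = b.1.1 x
    by_cases hx : x ∈ I
    · rw [hker0 a x hx, hker0 b x hx]
    · have hxc : x ∈ Iᶜ := Finset.mem_compl.mpr hx
      have h1 := congrFun hab' (e ⟨x, hxc⟩)
      simpa [hL, LinearMap.funLeft_apply] using h1
  have hEdim := LinearMap.finrank_range_of_inj hinj
  have hEdist : ∀ y ∈ LinearMap.range ψ, y ≠ 0 → d ≤ hammingNorm y := by
    rintro - ⟨a, rfl⟩ hy0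
    have hc0 : (a.1.1 : Fin n → F) ≠ 0 := by
      intro hc
      apply hy0
      show L a.1.1 = 0
      rw [hc, map_zero]
    have hdc : d ≤ hammingNorm a.1.1 := hd a.1.1 a.1.2 hc0
    have hnorm : hammingNorm (a.1.1 : Fin n → F) ≤ hammingNorm (ψ a) := by
      have hsurj : Set.SurjOn (fun j : Fin m => ((e.symm j : {x // x ∈ Iᶜ}) : Fin n))
          ↑({j : Fin m | (ψ a) j ≠ 0} : Finset (Fin m))
          ↑({x : Fin n | a.1.1 x ≠ 0} : Finset (Fin n)) := by
        intro x hx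
        rw [Finset.mem_coe, Finset.mem_filter] at hx
        have hxne : a.1.1 x ≠ 0 := hx.2
        have hxI : x ∉ I := fun hxI => hxne (hker0 a x hxI)
        have hxc : x ∈ Iᶜ := Finset.mem_compl.mpr hxI
        have hval : (ψ a) (e ⟨x, hxc⟩) = a.1.1 x := by
          show a.1.1 ((e.symm (e ⟨x, hxc⟩) : {x // x ∈ Iᶜ}) : Fin n) = a.1.1 x
          rw [Equiv.symm_apply_apply]
        refine ⟨e ⟨x, hxc⟩, Finset.mem_coe.mpr (Finset.mem_filter.mpr
          ⟨Finset.mem_univ _, ?_⟩), ?_⟩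
        · rw [hval]; exact hxne
        · show ((e.symm (e ⟨x, hxc⟩) : {x // x ∈ Iᶜ}) : Fin n) = x
          rw [Equiv.symm_apply_apply]
      exact Finset.card_le_card_of_surjOn _ hsurj
    exact le_trans hdc hnorm
  -- the minimum distance of the shortened code
  -- kopt membership
  have hbdd : BddAbove {k | ∃ C' : Submodule F (Fin m → F), Module.finrank F C' = k ∧
      ∀ c ∈ C', c ≠ 0 → d ≤ hammingNorm c} := by
    refine ⟨m, ?_⟩
    rintro k ⟨C', hC', -⟩
    have := Submodule.finrank_le C'
    rw [Module.finrank_pi, Fintype.card_fin] at this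
    omega
  have hmem : Module.finrank F K ∈ {k | ∃ C' : Submodule F (Fin m → F),
      Module.finrank F C' = k ∧ ∀ c ∈ C', c ≠ 0 → d ≤ hammingNorm c} :=
    ⟨LinearMap.range ψ, hEdim, hEdist⟩
  have hle : Module.finrank F K ≤ kopt F m d := le_csSup hbdd hmem
  rw [hrange] at rn
  rw [projDim_def]
  omega


theorem stmt10 {F : Type*} [Field F] [Fintype F] [DecidableEq F]
    {n n₁ n₂ k d r₁ r₂ : ℕ}
    (hr₁ : 0 < r₁) (hr : r₁ < r₂) (hn₁ : 1 ≤ n₁) (hn₂ : 1 ≤ n₂)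
    (C : Submodule F (Fin n → F)) (hC : IsLinearCode F C k d)
    (S₁ S₂ : Finset (Fin n)) (hdisj : Disjoint S₁ S₂) (hcover : S₁ ∪ S₂ = Finset.univ)
    (hcard₁ : S₁.card = n₁) (hcard₂ : S₂.card = n₂)
    (hloc₁ : ∀ i ∈ S₁, HasLocalityIn F C i r₁ S₁)
    (hloc₂ : ∀ i ∈ S₂, HasLocalityIn F C i r₂ S₂) :
    ∀ t₁ t₂ : ℕ, 1 ≤ t₁ → (t₁ : ℤ) ≤ ⌈(n₁ : ℚ) / ((r₁ : ℚ) + 1)⌉ →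
      1 ≤ t₂ → (t₂ : ℤ) ≤ ⌈(n₂ : ℚ) / ((r₂ : ℚ) + 1)⌉ →
      k ≤ t₁ * r₁ + t₂ * r₂ +
        kopt F (n - min n₁ (t₁ * (r₁ + 1)) - min n₂ (t₂ * (r₂ + 1))) d  := by
  intro t₁ t₂ ht₁ ht₁c ht₂ ht₂c
  classical
  have hceil₁ : (t₁ - 1) * (r₁ + 1) < n₁ := by
    have h1 : ((t₁ : ℤ) - 1) < ⌈(n₁ : ℚ) / ((r₁ : ℚ) + 1)⌉ := by omega
    have h2 : (((t₁ : ℤ) - 1 : ℤ) : ℚ) < (n₁ : ℚ) / ((r₁ : ℚ) + 1) := Int.lt_ceil.mp h1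
    have hpos : (0 : ℚ) < (r₁ : ℚ) + 1 := by positivity
    rw [lt_div_iff₀ hpos] at h2
    have h3 : (((t₁ - 1) * (r₁ + 1) : ℕ) : ℚ) = ((t₁ : ℚ) - 1) * ((r₁ : ℚ) + 1) := by
      push_cast [Nat.cast_sub ht₁]
      ring
    have h4 : (((t₁ - 1) * (r₁ + 1) : ℕ) : ℚ) < (n₁ : ℚ) := by
      rw [h3]
      push_cast at h2 ⊢
      exact h2
    exact_mod_cast h4
  have hceil₂ : (t₂ - 1) * (r₂ + 1) < n₂ := by
    have h1 : ((t₂ : ℤ) - 1) < ⌈(n₂ : ℚ) / ((r₂ : ℚ) + 1)⌉ := by omega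
    have h2 : (((t₂ : ℤ) - 1 : ℤ) : ℚ) < (n₂ : ℚ) / ((r₂ : ℚ) + 1) := Int.lt_ceil.mp h1
    have hpos : (0 : ℚ) < (r₂ : ℚ) + 1 := by positivity
    rw [lt_div_iff₀ hpos] at h2
    have h3 : (((t₂ - 1) * (r₂ + 1) : ℕ) : ℚ) = ((t₂ : ℚ) - 1) * ((r₂ : ℚ) + 1) := by
      push_cast [Nat.cast_sub ht₂]
      ring
    have h4 : (((t₂ - 1) * (r₂ + 1) : ℕ) : ℚ) < (n₂ : ℚ) := by
      rw [h3]
      push_cast at h2 ⊢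
      exact h2
    exact_mod_cast h4
  obtain ⟨I₁, hI₁S, hI₁card, hI₁dim⟩ := greedy C S₁ r₁ hloc₁ t₁ (by rw [hcard₁]; exact hceil₁)
  obtain ⟨I₂, hI₂S, hI₂card, hI₂dim⟩ := greedy C S₂ r₂ hloc₂ t₂ (by rw [hcard₂]; exact hceil₂)
  rw [hcard₁] at hI₁card
  rw [hcard₂] at hI₂card
  have hIdisj : Disjoint I₁ I₂ := hdisj.mono hI₁S hI₂S
  have hucard : (I₁ ∪ I₂).card = min n₁ (t₁ * (r₁ + 1)) + min n₂ (t₂ * (r₂ + 1)) := by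
    rw [Finset.card_union_of_disjoint hIdisj, hI₁card, hI₂card]
  have hu := projDim_union_le C I₁ I₂
  have he₁ : t₁ * (r₁ + 1) = t₁ * r₁ + t₁ := by ring
  have he₂ : t₂ * (r₂ + 1) = t₂ * r₂ + t₂ := by ring
  have hm₁ : min n₁ (t₁ * (r₁ + 1)) ≤ t₁ * (r₁ + 1) := min_le_right _ _
  have hm₂ : min n₂ (t₂ * (r₂ + 1)) ≤ t₂ * (r₂ + 1) := min_le_right _ _
  have hd₁ : projDim F C I₁ ≤ t₁ * r₁ := by omega
  have hd₂ : projDim F C I₂ ≤ t₂ * r₂ := by omega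
  have hshort := shorten_s10 C hC.2.1 (I₁ ∪ I₂)
  rw [hucard] at hshort
  have hsub : n - min n₁ (t₁ * (r₁ + 1)) - min n₂ (t₂ * (r₂ + 1))
      = n - (min n₁ (t₁ * (r₁ + 1)) + min n₂ (t₂ * (r₂ + 1))) := Nat.sub_sub _ _ _
  rw [hsub]
  have hk : Module.finrank F C = k := hC.1
  omega
end
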